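/- (Key recursion for OOMD.) Suppose ψ is differentiable and 1-strongly convex with respect to the 2-norm on Z and η ≤ 1/(8P). Then for every Nash equilibrium z* ∈ Z* and every t ≥ 1, the OOMD iterates satisfy Θ_{t+1} ≤ Θ_t − (15/16) ζ_t, where Θ_t := D_ψ(z*, ẑ_t) + (1/16) D_ψ(ẑ_t, z_{t−1}) and ζ_t := D_ψ(ẑ_{t+1}, z_t) + D_ψ(z_t, ẑ_t). -/

import Mathlib

open Finset Filter Topology

noncomputable section

/-- Squared Euclidean norm on `ℝ^n`. -/
def sqnorm {n : ℕ} (z : Fin n → ℝ) : ℝ := ∑ i, (z i) ^ 2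

/-- Euclidean (2-)norm on `ℝ^n`. -/
def norm2 {n : ℕ} (z : Fin n → ℝ) : ℝ := Real.sqrt (sqnorm z)

/-- 1-norm on `ℝ^n`. -/
def norm1 {n : ℕ} (z : Fin n → ℝ) : ℝ := ∑ i, |z i|

/-- Dot product on `ℝ^n`. -/
def dotp {n : ℕ} (a b : Fin n → ℝ) : ℝ := ∑ i, a i * b i

/-- Treeplexes (Hoda et al.): probability simplexes, Cartesian products, and branching. -/
inductive IsTreeplex : {n : ℕ} → Set (Fin n → ℝ) → Prop
  | simplex (m : ℕ) :
      IsTreeplex {x : Fin (m + 1) → ℝ | (∀ i, 0 ≤ x i) ∧ (∑ i, x i) = 1}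
  | prod {m k : ℕ} {S : Set (Fin m → ℝ)} {T : Set (Fin k → ℝ)} :
      IsTreeplex S → IsTreeplex T →
      IsTreeplex {z : Fin (m + k) → ℝ | ∃ u ∈ S, ∃ v ∈ T, z = Fin.append u v}
  | branch {m k : ℕ} {S : Set (Fin m → ℝ)} {T : Set (Fin k → ℝ)} (i : Fin m) :
      IsTreeplex S → IsTreeplex T →
      IsTreeplex {z : Fin (m + k) → ℝ | ∃ u ∈ S, ∃ v ∈ T,
        z = Fin.append u (fun j => u i * v j)}

/-- A point `z = (x, y)` of the product space `ℝ^M × ℝ^N`. -/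
abbrev Pt (M N : ℕ) := (Fin M → ℝ) × (Fin N → ℝ)

def dotPt {M N : ℕ} (a b : Pt M N) : ℝ := dotp a.1 b.1 + dotp a.2 b.2

def sqnormPt {M N : ℕ} (z : Pt M N) : ℝ := sqnorm z.1 + sqnorm z.2

def norm2Pt {M N : ℕ} (z : Pt M N) : ℝ := Real.sqrt (sqnormPt z)

def norm1Pt {M N : ℕ} (z : Pt M N) : ℝ := norm1 z.1 + norm1 z.2

/-- The game operator `F(z) = (G y, -Gᵀ x)`. -/
def Fop {M N : ℕ} (G : Matrix (Fin M) (Fin N) ℝ) (z : Pt M N) : Pt M N :=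
  (G.mulVec z.2, -(G.transpose.mulVec z.1))

/-- Bregman divergence of `ψ` (via the Fréchet derivative). -/
def Dbreg {M N : ℕ} (ψ : Pt M N → ℝ) (u v : Pt M N) : ℝ :=
  ψ u - ψ v - fderiv ℝ ψ v (u - v)

/-- Bregman divergence on a single space. -/
def Dbreg1 {n : ℕ} (ψ : (Fin n → ℝ) → ℝ) (u v : Fin n → ℝ) : ℝ :=
  ψ u - ψ v - fderiv ℝ ψ v (u - v)

/-- Optimistic online mirror descent with Bregman-divergence function `D`,
step size `η`, iterates `z` and `zh` (the latter is `ẑ`), started from an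
arbitrary `ẑ₁ = z₀ ∈ Z`. -/
def IsOOMD {M N : ℕ} (G : Matrix (Fin M) (Fin N) ℝ) (Z : Set (Pt M N))
    (D : Pt M N → Pt M N → ℝ) (η : ℝ) (z zh : ℕ → Pt M N) : Prop :=
  z 0 ∈ Z ∧ zh 1 = z 0 ∧
  (∀ t : ℕ, 1 ≤ t → z t ∈ Z ∧
    ∀ w ∈ Z, η * dotPt (z t) (Fop G (z (t - 1))) + D (z t) (zh t) ≤
      η * dotPt w (Fop G (z (t - 1))) + D w (zh t)) ∧
  (∀ t : ℕ, 1 ≤ t → zh (t + 1) ∈ Z ∧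
    ∀ w ∈ Z, η * dotPt (zh (t + 1)) (Fop G (z t)) + D (zh (t + 1)) (zh t) ≤
      η * dotPt w (Fop G (z t)) + D w (zh t))

def maxPayoff {M N : ℕ} (G : Matrix (Fin M) (Fin N) ℝ) (Y : Set (Fin N → ℝ))
    (x : Fin M → ℝ) : ℝ :=
  sSup ((fun y => dotp x (G.mulVec y)) '' Y)

def minPayoff {M N : ℕ} (G : Matrix (Fin M) (Fin N) ℝ) (X : Set (Fin M → ℝ))
    (y : Fin N → ℝ) : ℝ :=
  sInf ((fun x => dotp x (G.mulVec y)) '' X)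

/-- `X* = argmin_{x ∈ X} max_{y ∈ Y} xᵀGy`. -/
def Xstar {M N : ℕ} (G : Matrix (Fin M) (Fin N) ℝ) (X : Set (Fin M → ℝ))
    (Y : Set (Fin N → ℝ)) : Set (Fin M → ℝ) :=
  {x ∈ X | ∀ x' ∈ X, maxPayoff G Y x ≤ maxPayoff G Y x'}

/-- `Y* = argmax_{y ∈ Y} min_{x ∈ X} xᵀGy`. -/
def Ystar {M N : ℕ} (G : Matrix (Fin M) (Fin N) ℝ) (X : Set (Fin M → ℝ))
    (Y : Set (Fin N → ℝ)) : Set (Fin N → ℝ) :=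
  {y ∈ Y | ∀ y' ∈ Y, minPayoff G X y' ≤ minPayoff G X y}

/-- The set of Nash equilibria `Z* = X* × Y*`. -/
def NashSet {M N : ℕ} (G : Matrix (Fin M) (Fin N) ℝ) (X : Set (Fin M → ℝ))
    (Y : Set (Fin N → ℝ)) : Set (Pt M N) :=
  (Xstar G X Y) ×ˢ (Ystar G X Y)

/-- Generalized KL divergence (Bregman divergence of the vanilla entropy),
with the convention `0 ln 0 = 0`. -/
def KLgen {n : ℕ} (u v : Fin n → ℝ) : ℝ :=
  ∑ i, (u i * Real.log (u i / v i) - u i + v i)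

def KLgenPt {M N : ℕ} (u v : Pt M N) : ℝ := KLgen u.1 v.1 + KLgen u.2 v.2

/-- The combinatorial structure of a treeplex in sequence form: indices `Fin n`,
information sets `Fin K`, the information set `owner i = h(i)` of each index,
and the parent index `parent h = σ(h)` of each information set (`none` for the
root convention `z_{σ(h)} = 1`), with an acyclicity witness. -/
structure TreeplexData (n K : ℕ) where
  owner : Fin n → Fin K
  parent : Fin K → Option (Fin n)
  rank : Fin K → ℕ
  parent_rank : ∀ (h : Fin K) (j : Fin n), parent h = some j → rank (owner j) < rank h

/-- `z_{σ(h)}`, with the convention that it is `1` when `h` has no parent. -/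
def TreeplexData.parentVal {n K : ℕ} (T : TreeplexData n K) (z : Fin n → ℝ) (h : Fin K) : ℝ :=
  (T.parent h).elim 1 z

/-- The treeplex determined by `T`: `z ≥ 0` with `∑_{i ∈ Ω_h} z_i = z_{σ(h)}`. -/
def TreeplexData.set {n K : ℕ} (T : TreeplexData n K) : Set (Fin n → ℝ) :=
  {z | (∀ i, 0 ≤ z i) ∧
    ∀ h : Fin K, (∑ i ∈ Finset.univ.filter (fun i => T.owner i = h), z i) = T.parentVal z h}

/-- `q_i = z_i / z_{p_i}`. -/
def TreeplexData.q {n K : ℕ} (T : TreeplexData n K) (z : Fin n → ℝ) (i : Fin n) : ℝ :=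
  z i / T.parentVal z (T.owner i)

/-- The dilated entropy `Ψ^dil_α(z) = ∑_i α_{h(i)} z_i ln q_i`. -/
def dilEnt {n K : ℕ} (T : TreeplexData n K) (α : Fin K → ℝ) (z : Fin n → ℝ) : ℝ :=
  ∑ i, α (T.owner i) * z i * Real.log (T.q z i)

/-- Bregman divergence of the dilated entropy:
`D(u, z) = ∑_i α_{h(i)} u_i ln(q^u_i / q^z_i)`, with `0 ln 0 = 0`. -/
def dilEntBreg {n K : ℕ} (T : TreeplexData n K) (α : Fin K → ℝ) (u z : Fin n → ℝ) : ℝ :=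
  ∑ i, α (T.owner i) * u i * Real.log (T.q u i / T.q z i)

/-- Coordinates of a pair `z = (x, y)` indexed by `Fin M ⊕ Fin N`. -/
def coordsOf {M N : ℕ} (z : Pt M N) : Fin M ⊕ Fin N → ℝ := Sum.elim z.1 z.2


/-!
Both OOMD updates are mirror steps from `ẑ_t`. Adding their three-point inequalities, with
`z*` as comparison point for `ẑ_{t+1}` and `ẑ_{t+1}` as comparison point for `z_t`, gives the
recursion up to two terms. The gap `η⟨z_t − z*, F(z_t)⟩` is nonnegative because a Nash
equilibrium is a saddle point of `xᵀGy` (Sion's minimax theorem; treeplexes are compact and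
convex). For the optimism error `S = η⟨z_t − ẑ_{t+1}, F(z_t) − F(z_{t−1})⟩`, adding the
first-order conditions of the two steps and using strong convexity gives
`‖z_t − ẑ_{t+1}‖² ≤ S`; Cauchy–Schwarz and `‖F(u)‖² ≤ MN‖u‖²` then give
`S ≤ η²MN‖z_t − z_{t−1}‖² ≤ 4η²MN (D(z_t, ẑ_t) + D(ẑ_t, z_{t−1}))`, and `η ≤ 1/(8P)` makes
`4η²MN ≤ 1/64`.
-/

open Matrix

theorem Fin.append_add_append {α : Type*} [Add α] {m k : ℕ} (u u' : Fin m → α)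
    (v v' : Fin k → α) : Fin.append u v + Fin.append u' v' = Fin.append (u + u') (v + v') := by
  funext i
  refine Fin.addCases (fun j => ?_) (fun j => ?_) i <;> simp

theorem Fin.smul_append {R α : Type*} [SMul R α] {m k : ℕ} (a : R) (u : Fin m → α)
    (v : Fin k → α) : a • Fin.append u v = Fin.append (a • u) (a • v) := by
  funext i
  refine Fin.addCases (fun j => ?_) (fun j => ?_) i <;> simp

theorem Set.setOf_exists_mem_eq_image_prod {α β γ : Type*} (S : Set α) (T : Set β)
    (f : α → β → γ) :
    {z | ∃ u ∈ S, ∃ v ∈ T, z = f u v} = (fun p : α × β => f p.1 p.2) '' S ×ˢ T := by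
  rw [Set.image_prod]
  ext
  simp [Set.image2, eq_comm]

theorem Convex.exists_add_smul_eq {E : Type*} [AddCommGroup E] [Module ℝ E] {T : Set E}
    (hT : Convex ℝ T) {a b : ℝ} (ha : 0 ≤ a) (hb : 0 ≤ b) {v v' : E} (hv : v ∈ T)
    (hv' : v' ∈ T) : ∃ w ∈ T, a • v + b • v' = (a + b) • w := by
  rcases (add_nonneg ha hb).eq_or_lt with hab | hab
  · obtain ⟨rfl, rfl⟩ : a = 0 ∧ b = 0 := ⟨by linarith, by linarith⟩
    exact ⟨v, hv, by simp⟩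
  · refine ⟨(a / (a + b)) • v + (b / (a + b)) • v', hT hv hv' (by positivity) (by positivity)
      (by field_simp), ?_⟩
    rw [smul_add, smul_smul, smul_smul, mul_div_cancel₀ _ hab.ne', mul_div_cancel₀ _ hab.ne']

namespace IsTreeplex

variable {n : ℕ} {S : Set (Fin n → ℝ)}

theorem nonneg (h : IsTreeplex S) {z : Fin n → ℝ} (hz : z ∈ S) (i : Fin n) : 0 ≤ z i := by
  induction h with
  | simplex m => exact hz.1 i
  | prod _ _ ihS ihT =>
    obtain ⟨u, hu, v, hv, rfl⟩ := hz
    refine Fin.addCases (fun j => ?_) (fun j => ?_) i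
    · simpa using ihS hu j
    · simpa using ihT hv j
  | branch k _ _ ihS ihT =>
    obtain ⟨u, hu, v, hv, rfl⟩ := hz
    refine Fin.addCases (fun j => ?_) (fun j => ?_) i
    · simpa using ihS hu j
    · simpa using mul_nonneg (ihS hu k) (ihT hv j)

theorem nonempty (h : IsTreeplex S) : S.Nonempty := by
  induction h with
  | simplex m => exact ⟨_, single_mem_stdSimplex ℝ 0⟩
  | prod _ _ ihS ihT =>
    obtain ⟨⟨u, hu⟩, ⟨v, hv⟩⟩ := And.intro ihS ihT
    exact ⟨_, u, hu, v, hv, rfl⟩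
  | branch k _ _ ihS ihT =>
    obtain ⟨⟨u, hu⟩, ⟨v, hv⟩⟩ := And.intro ihS ihT
    exact ⟨_, u, hu, v, hv, rfl⟩

theorem convex (h : IsTreeplex S) : Convex ℝ S := by
  induction h with
  | simplex m => exact convex_stdSimplex ℝ (Fin (m + 1))
  | prod _ _ ihS ihT =>
    rintro _ ⟨u, hu, v, hv, rfl⟩ _ ⟨u', hu', v', hv', rfl⟩ a b ha hb hab
    refine ⟨a • u + b • u', ihS hu hu' ha hb hab, a • v + b • v', ihT hv hv' ha hb hab, ?_⟩
    rw [Fin.smul_append, Fin.smul_append, Fin.append_add_append]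
  | branch k hS _ ihS ihT =>
    rintro _ ⟨u, hu, v, hv, rfl⟩ _ ⟨u', hu', v', hv', rfl⟩ a b ha hb hab
    obtain ⟨w, hw, hvw⟩ := ihT.exists_add_smul_eq (mul_nonneg ha (hS.nonneg hu k))
      (mul_nonneg hb (hS.nonneg hu' k)) hv hv'
    refine ⟨a • u + b • u', ihS hu hu' ha hb hab, w, hw, ?_⟩
    rw [Fin.smul_append, Fin.smul_append, Fin.append_add_append]
    congr 1
    funext j
    simpa [mul_assoc] using congrFun hvw j

theorem isCompact (h : IsTreeplex S) : IsCompact S := by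
  induction h with
  | simplex m => exact isCompact_stdSimplex ℝ (Fin (m + 1))
  | prod _ _ ihS ihT =>
    rw [Set.setOf_exists_mem_eq_image_prod]
    exact (ihS.prod ihT).image (by fun_prop)
  | @branch m k S T i _ _ ihS ihT =>
    rw [Set.setOf_exists_mem_eq_image_prod _ _ fun u (v : Fin k → ℝ) =>
      Fin.append u fun j => u i * v j]
    exact (ihS.prod ihT).image (by fun_prop)

end IsTreeplex

section Geometry

variable {M N : ℕ}

theorem dotp_eq_dotProduct {n : ℕ} (a b : Fin n → ℝ) : dotp a b = a ⬝ᵥ b := rfl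

theorem dotPt_eq_sum_coordsOf (a b : Pt M N) :
    dotPt a b = ∑ i, coordsOf a i * coordsOf b i := by
  simp [dotPt, dotp, coordsOf, Fintype.sum_sum_type]

theorem sqnormPt_eq_sum_coordsOf (a : Pt M N) : sqnormPt a = ∑ i, coordsOf a i ^ 2 := by
  simp [sqnormPt, sqnorm, coordsOf, Fintype.sum_sum_type]

theorem dotPt_sub_left (a b c : Pt M N) : dotPt (a - b) c = dotPt a c - dotPt b c := by
  simp only [dotPt, dotp_eq_dotProduct, Prod.fst_sub, Prod.snd_sub, sub_dotProduct]
  ring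

theorem dotPt_sub_right (a b c : Pt M N) : dotPt a (b - c) = dotPt a b - dotPt a c := by
  simp only [dotPt, dotp_eq_dotProduct, Prod.fst_sub, Prod.snd_sub, dotProduct_sub]
  ring

theorem sqnormPt_nonneg (a : Pt M N) : 0 ≤ sqnormPt a := by
  rw [sqnormPt_eq_sum_coordsOf]
  positivity

theorem sqnormPt_sub_comm (a b : Pt M N) : sqnormPt (a - b) = sqnormPt (b - a) := by
  simp only [sqnormPt, sqnorm, Prod.fst_sub, Prod.snd_sub, Pi.sub_apply, sub_sq_comm (a.1 _),
    sub_sq_comm (a.2 _)]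

theorem sqnormPt_add_le (a b : Pt M N) :
    sqnormPt (a + b) ≤ 2 * sqnormPt a + 2 * sqnormPt b := by
  simp only [sqnormPt_eq_sum_coordsOf, Finset.mul_sum, ← Finset.sum_add_distrib, ← mul_add]
  gcongr with i
  have hi : coordsOf (a + b) i = coordsOf a i + coordsOf b i := by cases i <;> rfl
  exact hi ▸ add_sq_le

theorem dotPt_sq_le (a b : Pt M N) : dotPt a b ^ 2 ≤ sqnormPt a * sqnormPt b := by
  simp only [dotPt_eq_sum_coordsOf, sqnormPt_eq_sum_coordsOf]
  exact Finset.sum_mul_sq_le_sq_mul_sq _ _ _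

theorem sqnorm_mulVec_le {m n : ℕ} (A : Matrix (Fin m) (Fin n) ℝ) (hA : ∀ i j, |A i j| ≤ 1)
    (v : Fin n → ℝ) : sqnorm (A *ᵥ v) ≤ m * n * sqnorm v := by
  have hrow : ∀ i, (A *ᵥ v) i ^ 2 ≤ n * sqnorm v := fun i => calc
    (A *ᵥ v) i ^ 2 ≤ (∑ j, A i j ^ 2) * sqnorm v := Finset.sum_mul_sq_le_sq_mul_sq univ (A i) v
    _ ≤ (∑ _j : Fin n, (1 : ℝ)) * sqnorm v := by
      gcongr with j
      · exact Finset.sum_nonneg fun _ _ => sq_nonneg _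
      · exact (sq_le_one_iff_abs_le_one _).mpr (hA i j)
    _ = n * sqnorm v := by simp
  calc sqnorm (A *ᵥ v) ≤ ∑ _i : Fin m, n * sqnorm v := Finset.sum_le_sum fun i _ => hrow i
    _ = m * n * sqnorm v := by simp [mul_assoc]

theorem Fop_sub (G : Matrix (Fin M) (Fin N) ℝ) (u v : Pt M N) :
    Fop G u - Fop G v = Fop G (u - v) := by
  simp only [Fop, Prod.mk_sub_mk, Prod.fst_sub, Prod.snd_sub, Matrix.mulVec_sub]
  abel_nf

theorem sqnormPt_Fop_le (G : Matrix (Fin M) (Fin N) ℝ) (hG : ∀ i j, |G i j| ≤ 1) (u : Pt M N) :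
    sqnormPt (Fop G u) ≤ M * N * sqnormPt u := by
  have h₁ := sqnorm_mulVec_le G hG u.2
  have h₂ := sqnorm_mulVec_le Gᵀ (fun j i => hG i j) u.1
  simp only [sqnormPt, Fop, sqnorm, Pi.neg_apply, neg_sq] at *
  linarith

theorem dotp_transpose_mulVec {m n : ℕ} (A : Matrix (Fin m) (Fin n) ℝ) (x : Fin m → ℝ)
    (y : Fin n → ℝ) : dotp y (Aᵀ *ᵥ x) = dotp x (A *ᵥ y) := by
  rw [dotp_eq_dotProduct, dotp_eq_dotProduct, mulVec_transpose, dotProduct_comm,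
    dotProduct_mulVec]

theorem dotPt_sub_Fop (G : Matrix (Fin M) (Fin N) ℝ) (u w : Pt M N) :
    dotPt (u - w) (Fop G u) = dotp u.1 (G *ᵥ w.2) - dotp w.1 (G *ᵥ u.2) := by
  simp only [dotPt, Fop, dotp_eq_dotProduct, Prod.fst_sub, Prod.snd_sub, sub_dotProduct,
    dotProduct_neg]
  simp only [← dotp_eq_dotProduct, dotp_transpose_mulVec]
  ring

end Geometry

section Saddle

variable {M N : ℕ} (G : Matrix (Fin M) (Fin N) ℝ) {X : Set (Fin M → ℝ)} {Y : Set (Fin N → ℝ)}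

theorem continuous_dotp_mulVec_left (y : Fin N → ℝ) :
    Continuous fun x : Fin M → ℝ => dotp x (G *ᵥ y) := by
  simp only [dotp_eq_dotProduct]
  fun_prop

theorem continuous_dotp_mulVec_right (x : Fin M → ℝ) :
    Continuous fun y : Fin N → ℝ => dotp x (G *ᵥ y) := by
  simp only [dotp_eq_dotProduct]
  fun_prop

theorem exists_isSaddlePointOn_dotp_mulVec (hXne : X.Nonempty) (hXc : Convex ℝ X)
    (hXk : IsCompact X) (hYne : Y.Nonempty) (hYc : Convex ℝ Y) (hYk : IsCompact Y) :
    ∃ a ∈ X, ∃ b ∈ Y, IsSaddlePointOn X Y (fun x y => dotp x (G *ᵥ y)) a b :=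
  Sion.exists_isSaddlePointOn hXne hXc hXk
    (fun y _ => (continuous_dotp_mulVec_left G y).continuousOn.lowerSemicontinuousOn)
    (fun y _ => (((dotProductBilin ℝ ℝ).flip (G *ᵥ y)).convexOn hXc).quasiconvexOn)
    hYc hYne hYk
    (fun x _ => (continuous_dotp_mulVec_right G x).continuousOn.upperSemicontinuousOn)
    (fun x _ => ((((dotProductBilin ℝ ℝ) x).comp (mulVecLin G)).concaveOn hYc).quasiconcaveOn)

theorem isSaddlePointOn_of_mem_NashSet (hXk : IsCompact X) (hYk : IsCompact Y)
    (hsaddle : ∃ a ∈ X, ∃ b ∈ Y, IsSaddlePointOn X Y (fun x y => dotp x (G *ᵥ y)) a b)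
    {zs : Pt M N} (hzs : zs ∈ NashSet G X Y) :
    IsSaddlePointOn X Y (fun x y => dotp x (G *ᵥ y)) zs.1 zs.2 := by
  obtain ⟨a, ha, b, hb, hab⟩ := hsaddle
  intro x hx y hy
  calc dotp zs.1 (G *ᵥ y)
      ≤ maxPayoff G Y zs.1 :=
        le_csSup (hYk.image (continuous_dotp_mulVec_right G _)).bddAbove ⟨y, hy, rfl⟩
    _ ≤ maxPayoff G Y a := hzs.1.2 a ha
    _ ≤ dotp a (G *ᵥ b) := csSup_le (Set.Nonempty.image _ ⟨y, hy⟩) <| by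
        rintro _ ⟨y', hy', rfl⟩
        exact hab a ha y' hy'
    _ ≤ minPayoff G X b := le_csInf (Set.Nonempty.image _ ⟨x, hx⟩) <| by
        rintro _ ⟨x', hx', rfl⟩
        exact hab x' hx' b hb
    _ ≤ minPayoff G X zs.2 := hzs.2.2 b hb
    _ ≤ dotp x (G *ᵥ zs.2) :=
        csInf_le (hXk.image (continuous_dotp_mulVec_left G _)).bddBelow ⟨x, hx, rfl⟩

theorem dotPt_sub_Fop_nonneg {zs z : Pt M N}
    (hzs : IsSaddlePointOn X Y (fun x y => dotp x (G *ᵥ y)) zs.1 zs.2) (hz : z ∈ X ×ˢ Y) :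
    0 ≤ dotPt (z - zs) (Fop G z) := by
  rw [dotPt_sub_Fop]
  exact sub_nonneg.mpr (hzs z.1 hz.1 z.2 hz.2)

end Saddle

theorem le_of_sq_le_mul_of_le {a s k : ℝ} (has : a ≤ s) (hs : s ^ 2 ≤ a * k)
    (hk : 0 ≤ k) : s ≤ k := by
  nlinarith

theorem sq_mul_mul_le_of_le_one_div {η m n : ℝ} (hη : 0 ≤ η) (hm : 0 ≤ m) (hn : 0 ≤ n)
    (h : η ≤ 1 / (8 * (m + n))) : η ^ 2 * (m * n) ≤ 1 / 256 := by
  have h8 : η * (m + n) ≤ 1 / 8 := by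
    rcases (add_nonneg hm hn).eq_or_lt with h0 | h0
    · rw [← h0]
      norm_num
    · rw [le_div_iff₀ (by positivity)] at h
      linarith
  nlinarith [mul_nonneg hη (add_nonneg hm hn), mul_nonneg (sq_nonneg η) (sq_nonneg (m - n))]

theorem IsMinOn.hasFDerivAt_nonneg_of_convex {E : Type*} [NormedAddCommGroup E]
    [NormedSpace ℝ E] {f : E → ℝ} {f' : E →L[ℝ] ℝ} {s : Set E} {p w : E} (hs : Convex ℝ s)
    (hmin : IsMinOn f s p) (hf : HasFDerivAt f f' p) (hp : p ∈ s) (hw : w ∈ s) :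
    0 ≤ f' (w - p) :=
  hmin.localize.hasFDerivWithinAt_nonneg hf.hasFDerivWithinAt
    (sub_mem_posTangentConeAt_of_segment_subset (hs.segment_subset hp hw))

section MirrorStep

variable {M N : ℕ} {ψ : Pt M N → ℝ} {Z : Set (Pt M N)} {η : ℝ} {c p p' g g' : Pt M N}

theorem Dbreg_three_point (ψ : Pt M N → ℝ) (u p c : Pt M N) :
    Dbreg ψ u c - Dbreg ψ u p - Dbreg ψ p c
      = fderiv ℝ ψ p (u - p) - fderiv ℝ ψ c (u - p) := by
  have h : u - c = (u - p) + (p - c) := by abel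
  simp only [Dbreg, h, map_add]
  ring

theorem Dbreg_add_Dbreg (ψ : Pt M N → ℝ) (u v : Pt M N) :
    Dbreg ψ u v + Dbreg ψ v u = fderiv ℝ ψ u (u - v) - fderiv ℝ ψ v (u - v) := by
  simp only [Dbreg, ← neg_sub u v, map_neg]
  ring

theorem Dbreg_nonneg (hsc : ∀ u ∈ Z, ∀ v ∈ Z, (1 / 2) * sqnormPt (u - v) ≤ Dbreg ψ u v)
    {u v : Pt M N} (hu : u ∈ Z) (hv : v ∈ Z) : 0 ≤ Dbreg ψ u v :=
  (mul_nonneg (by norm_num) (sqnormPt_nonneg _)).trans (hsc u hu v hv)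

def dotPtCLM (g : Pt M N) : Pt M N →L[ℝ] ℝ :=
  LinearMap.toContinuousLinearMap
    { toFun := fun w => dotPt w g
      map_add' := fun a b => by
        simp only [dotPt, dotp_eq_dotProduct, Prod.fst_add, Prod.snd_add, add_dotProduct]
        ring
      map_smul' := fun r a => by
        simp only [dotPt, dotp_eq_dotProduct, Prod.smul_fst, Prod.smul_snd, smul_dotProduct,
          smul_eq_mul, RingHom.id_apply]
        ring }

theorem hasFDerivAt_mirror_objective (hψ : DifferentiableAt ℝ ψ p) :
    HasFDerivAt (fun w => η * dotPt w g + Dbreg ψ w c)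
      (η • dotPtCLM g + (fderiv ℝ ψ p - fderiv ℝ ψ c)) p := by
  have hD : (fun w => Dbreg ψ w c) = fun w => ψ w - ψ c - (fderiv ℝ ψ c w - fderiv ℝ ψ c c) := by
    funext w
    simp [Dbreg, map_sub]
  refine ((dotPtCLM g).hasFDerivAt.const_mul η).add ?_
  rw [hD]
  exact (hψ.hasFDerivAt.sub_const _).sub ((fderiv ℝ ψ c).hasFDerivAt.sub_const _)

def IsMirrorStep (ψ : Pt M N → ℝ) (Z : Set (Pt M N)) (η : ℝ) (g c p : Pt M N) : Prop :=
  p ∈ Z ∧ ∀ w ∈ Z, η * dotPt p g + Dbreg ψ p c ≤ η * dotPt w g + Dbreg ψ w c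

namespace IsMirrorStep

theorem first_order (h : IsMirrorStep ψ Z η g c p) (hZ : Convex ℝ Z)
    (hψ : DifferentiableAt ℝ ψ p) {w : Pt M N} (hw : w ∈ Z) :
    0 ≤ η * dotPt (w - p) g + fderiv ℝ ψ p (w - p) - fderiv ℝ ψ c (w - p) := by
  have := IsMinOn.hasFDerivAt_nonneg_of_convex hZ (isMinOn_iff.mpr h.2)
    (hasFDerivAt_mirror_objective hψ) h.1 hw
  simpa [dotPtCLM, add_sub_assoc] using this

theorem three_point (h : IsMirrorStep ψ Z η g c p) (hZ : Convex ℝ Z)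
    (hψ : DifferentiableAt ℝ ψ p) {u : Pt M N} (hu : u ∈ Z) :
    η * dotPt (p - u) g ≤ Dbreg ψ u c - Dbreg ψ u p - Dbreg ψ p c := by
  have := h.first_order hZ hψ hu
  rw [Dbreg_three_point]
  simp only [dotPt_sub_left] at this ⊢
  linarith

theorem Dbreg_add_Dbreg_le (h : IsMirrorStep ψ Z η g c p) (h' : IsMirrorStep ψ Z η g' c p')
    (hZ : Convex ℝ Z) (hψ : DifferentiableAt ℝ ψ p) (hψ' : DifferentiableAt ℝ ψ p') :
    Dbreg ψ p p' + Dbreg ψ p' p ≤ η * dotPt (p - p') (g' - g) := by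
  have h₁ := h.first_order hZ hψ h'.1
  have h₂ := h'.first_order hZ hψ' h.1
  simp only [dotPt_sub_left, dotPt_sub_right] at h₁ h₂ ⊢
  rw [← neg_sub p p', map_neg, map_neg] at h₁
  rw [Dbreg_add_Dbreg]
  linarith

theorem optimism_error_le {G : Matrix (Fin M) (Fin N) ℝ} {q : Pt M N}
    (h : IsMirrorStep ψ Z η (Fop G q) c p) (h' : IsMirrorStep ψ Z η (Fop G p) c p')
    (hZ : Convex ℝ Z) (hG : ∀ i j, |G i j| ≤ 1)
    (hsc : ∀ u ∈ Z, ∀ v ∈ Z, (1 / 2) * sqnormPt (u - v) ≤ Dbreg ψ u v)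
    (hψ : DifferentiableAt ℝ ψ p) (hψ' : DifferentiableAt ℝ ψ p') (hc : c ∈ Z) (hq : q ∈ Z) :
    η * dotPt (p - p') (Fop G p - Fop G q)
      ≤ 4 * (η ^ 2 * (M * N)) * (Dbreg ψ p c + Dbreg ψ c q) := by
  set S := η * dotPt (p - p') (Fop G p - Fop G q)
  have hstab : sqnormPt (p - p') ≤ S := by
    have := h.Dbreg_add_Dbreg_le h' hZ hψ hψ'
    have h₁ := hsc p h.1 p' h'.1
    have h₂ := hsc p' h'.1 p h.1
    rw [sqnormPt_sub_comm] at h₂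
    linarith
  have hCS : S ^ 2 ≤ sqnormPt (p - p') * (η ^ 2 * (M * N) * sqnormPt (p - q)) := calc
    S ^ 2 = η ^ 2 * dotPt (p - p') (Fop G p - Fop G q) ^ 2 := by ring
    _ ≤ η ^ 2 * (sqnormPt (p - p') * sqnormPt (Fop G (p - q))) := by
      rw [← Fop_sub]
      gcongr
      exact dotPt_sq_le _ _
    _ ≤ η ^ 2 * (sqnormPt (p - p') * (M * N * sqnormPt (p - q))) := by
      gcongr
      · exact sqnormPt_nonneg _
      · exact sqnormPt_Fop_le G hG _
    _ = _ := by ring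
  have hS := le_of_sq_le_mul_of_le hstab hCS
    (mul_nonneg (by positivity) (sqnormPt_nonneg _))
  have htri : sqnormPt (p - q) ≤ 4 * (Dbreg ψ p c + Dbreg ψ c q) := by
    have := sqnormPt_add_le (p - c) (c - q)
    rw [sub_add_sub_cancel] at this
    linarith [hsc p h.1 c hc, hsc c hc q hq]
  calc S ≤ η ^ 2 * (M * N) * sqnormPt (p - q) := hS
    _ ≤ η ^ 2 * (M * N) * (4 * (Dbreg ψ p c + Dbreg ψ c q)) := by gcongr
    _ = _ := by ring

end IsMirrorStep

end MirrorStep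

namespace IsOOMD

variable {M N : ℕ} {G : Matrix (Fin M) (Fin N) ℝ} {Z : Set (Pt M N)}
  {D : Pt M N → Pt M N → ℝ} {η : ℝ} {z zh : ℕ → Pt M N}

theorem z_mem (h : IsOOMD G Z D η z zh) (t : ℕ) : z t ∈ Z := by
  rcases Nat.eq_zero_or_pos t with rfl | ht
  · exact h.1
  · exact (h.2.2.1 t ht).1

theorem zh_mem (h : IsOOMD G Z D η z zh) {t : ℕ} (ht : 1 ≤ t) : zh t ∈ Z := by
  obtain ⟨s, rfl⟩ := Nat.exists_eq_add_of_le' ht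
  rcases Nat.eq_zero_or_pos s with rfl | hs
  · exact h.2.1 ▸ h.1
  · exact (h.2.2.2 s hs).1

end IsOOMD

/-- key recursion, Eq. (2): for OOMD with a differentiable,
1-strongly-convex regularizer and `η ≤ 1/(8P)`, for every Nash equilibrium `z*`
and every `t ≥ 1`, `Θ_{t+1} ≤ Θ_t − (15/16) ζ_t`, where
`Θ_t = D_ψ(z*, ẑ_t) + (1/16) D_ψ(ẑ_t, z_{t−1})` and
`ζ_t = D_ψ(ẑ_{t+1}, z_t) + D_ψ(z_t, ẑ_t)`. -/
theorem oomd_key_recursion {M N : ℕ}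
    (G : Matrix (Fin M) (Fin N) ℝ) (hG : ∀ i j, |G i j| ≤ 1)
    (X : Set (Fin M → ℝ)) (Y : Set (Fin N → ℝ))
    (hX : IsTreeplex X) (hY : IsTreeplex Y)
    (ψ : Pt M N → ℝ)
    (hdiff : ∀ v ∈ X ×ˢ Y, DifferentiableAt ℝ ψ v)
    (hsc : ∀ u ∈ X ×ˢ Y, ∀ v ∈ X ×ˢ Y, (1 / 2) * sqnormPt (u - v) ≤ Dbreg ψ u v)
    (η : ℝ) (hη : 0 < η) (hηP : η ≤ 1 / (8 * ((M : ℝ) + N)))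
    (z zh : ℕ → Pt M N) (hoomd : IsOOMD G (X ×ˢ Y) (Dbreg ψ) η z zh) :
    ∀ zs ∈ NashSet G X Y, ∀ t : ℕ, 1 ≤ t →
      Dbreg ψ zs (zh (t + 1)) + (1 / 16) * Dbreg ψ (zh (t + 1)) (z t) ≤
        (Dbreg ψ zs (zh t) + (1 / 16) * Dbreg ψ (zh t) (z (t - 1)))
          - (15 / 16) * (Dbreg ψ (zh (t + 1)) (z t) + Dbreg ψ (z t) (zh t)) := by
  intro zs hzs t ht
  have hZ : Convex ℝ (X ×ˢ Y) := hX.convex.prod hY.convex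
  have hsaddle := isSaddlePointOn_of_mem_NashSet G hX.isCompact hY.isCompact
    (exists_isSaddlePointOn_dotp_mulVec G hX.nonempty hX.convex hX.isCompact
      hY.nonempty hY.convex hY.isCompact) hzs
  have hz : IsMirrorStep ψ (X ×ˢ Y) η (Fop G (z (t - 1))) (zh t) (z t) := hoomd.2.2.1 t ht
  have hzh : IsMirrorStep ψ (X ×ˢ Y) η (Fop G (z t)) (zh t) (zh (t + 1)) := hoomd.2.2.2 t ht
  have hzht := hoomd.zh_mem ht
  have hzprev := hoomd.z_mem (t - 1)
  have h₁ := hzh.three_point hZ (hdiff _ hzh.1) (show zs ∈ X ×ˢ Y from ⟨hzs.1.1, hzs.2.1⟩)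
  have h₂ := hz.three_point hZ (hdiff _ hz.1) hzh.1
  have hnash := mul_nonneg hη.le (dotPt_sub_Fop_nonneg G hsaddle hz.1)
  have herr := hz.optimism_error_le hzh hZ hG hsc (hdiff _ hz.1) (hdiff _ hzh.1) hzht hzprev
  have hD₁ := Dbreg_nonneg hsc hz.1 hzht
  have hD₂ := Dbreg_nonneg hsc hzht hzprev
  have hstep := mul_le_mul_of_nonneg_right
    (sq_mul_mul_le_of_le_one_div hη.le M.cast_nonneg N.cast_nonneg hηP) (add_nonneg hD₁ hD₂)
  have hsplit : η * dotPt (zh (t + 1) - zs) (Fop G (z t))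
        + η * dotPt (z t - zh (t + 1)) (Fop G (z (t - 1)))
      = η * dotPt (z t - zs) (Fop G (z t))
        - η * dotPt (z t - zh (t + 1)) (Fop G (z t) - Fop G (z (t - 1))) := by
    simp only [dotPt_sub_left, dotPt_sub_right]
    ring
  linarith
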